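/- Let u : ℝ × ℝ → ℝ be smooth with u_x(t,x) ≠ 0 for all (t,x), and suppose u satisfies the Schwarzian-KdV equation u_t = u_xxx − (3/2) u_x⁻¹ u_xx² at every point. Then the Schwarzian transform w̃(t,x) = −(1/2) [ u_xxx/u_x − (3/2)(u_xx/u_x)² ] satisfies the KdV equation w̃_t = w̃_xxx − 6 w̃ w̃_x at every point. -/

import Mathlib

/-- Partial derivative in the first (time) variable. -/
noncomputable def pt (u : ℝ → ℝ → ℝ) : ℝ → ℝ → ℝ := fun t x => deriv (fun s => u s x) t

/-- Partial derivative in the second (space) variable. -/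
noncomputable def px (u : ℝ → ℝ → ℝ) : ℝ → ℝ → ℝ := fun t x => deriv (fun y => u t y) x

open Function ContDiff

lemma inf_add_one_le : (∞ : WithTop ℕ∞) + 1 ≤ ∞ := by
  norm_num

variable {G : ℝ → ℝ → ℝ}

lemma sec2_hasDerivAt (hG : ContDiff ℝ ∞ (uncurry G)) (t x : ℝ) :
    HasDerivAt (G t) (fderiv ℝ (uncurry G) (t, x) (0, 1)) x := by
  have hd : HasFDerivAt (uncurry G) (fderiv ℝ (uncurry G) (t, x)) (t, x) :=
    ((hG.differentiable (by norm_num)) (t, x)).hasFDerivAt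
  have hι : HasDerivAt (fun y : ℝ => ((t, y) : ℝ × ℝ)) ((0 : ℝ), (1 : ℝ)) x :=
    (hasDerivAt_const x t).prodMk (hasDerivAt_id x)
  exact hd.comp_hasDerivAt x hι

lemma sec1_hasDerivAt (hG : ContDiff ℝ ∞ (uncurry G)) (t x : ℝ) :
    HasDerivAt (fun s => G s x) (fderiv ℝ (uncurry G) (t, x) (1, 0)) t := by
  have hd : HasFDerivAt (uncurry G) (fderiv ℝ (uncurry G) (t, x)) (t, x) :=
    ((hG.differentiable (by norm_num)) (t, x)).hasFDerivAt
  have hι : HasDerivAt (fun s : ℝ => ((s, x) : ℝ × ℝ)) ((1 : ℝ), (0 : ℝ)) t :=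
    (hasDerivAt_id t).prodMk (hasDerivAt_const t x)
  exact hd.comp_hasDerivAt t hι

lemma px_eq_fderiv (hG : ContDiff ℝ ∞ (uncurry G)) (t x : ℝ) :
    px G t x = fderiv ℝ (uncurry G) (t, x) (0, 1) := (sec2_hasDerivAt hG t x).deriv

lemma pt_eq_fderiv (hG : ContDiff ℝ ∞ (uncurry G)) (t x : ℝ) :
    pt G t x = fderiv ℝ (uncurry G) (t, x) (1, 0) := (sec1_hasDerivAt hG t x).deriv

lemma contDiff_px (hG : ContDiff ℝ ∞ (uncurry G)) : ContDiff ℝ ∞ (uncurry (px G)) := by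
  have h : uncurry (px G) = fun p : ℝ × ℝ => fderiv ℝ (uncurry G) p (0, 1) :=
    funext fun p => px_eq_fderiv hG p.1 p.2
  rw [h]
  exact (hG.fderiv_right inf_add_one_le).clm_apply contDiff_const

lemma contDiff_pt (hG : ContDiff ℝ ∞ (uncurry G)) : ContDiff ℝ ∞ (uncurry (pt G)) := by
  have h : uncurry (pt G) = fun p : ℝ × ℝ => fderiv ℝ (uncurry G) p (1, 0) :=
    funext fun p => pt_eq_fderiv hG p.1 p.2
  rw [h]
  exact (hG.fderiv_right inf_add_one_le).clm_apply contDiff_const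

lemma pt_px_comm (hG : ContDiff ℝ ∞ (uncurry G)) (t x : ℝ) :
    pt (px G) t x = px (pt G) t x := by
  set U := uncurry G
  set Φ := fderiv ℝ U with hΦ
  have hΦd : ContDiff ℝ ∞ Φ := hG.fderiv_right inf_add_one_le
  have hΦat : HasFDerivAt Φ (fderiv ℝ Φ (t, x)) (t, x) :=
    ((hΦd.differentiable (by norm_num)) (t, x)).hasFDerivAt
  have hsym : ∀ v w : ℝ × ℝ, fderiv ℝ Φ (t, x) v w = fderiv ℝ Φ (t, x) w v :=
    second_derivative_symmetric
      (fun y => ((hG.differentiable (by norm_num)) y).hasFDerivAt) hΦat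
  have e1 : uncurry (px G) = fun p : ℝ × ℝ => Φ p (0, 1) :=
    funext fun p => px_eq_fderiv hG p.1 p.2
  have e2 : uncurry (pt G) = fun p : ℝ × ℝ => Φ p (1, 0) :=
    funext fun p => pt_eq_fderiv hG p.1 p.2
  have hdiff : DifferentiableAt ℝ Φ (t, x) := hΦat.differentiableAt
  have d1 : pt (px G) t x = fderiv ℝ (fun p : ℝ × ℝ => Φ p (0, 1)) (t, x) (1, 0) := by
    rw [pt_eq_fderiv (contDiff_px hG) t x, e1]
  have d2 : px (pt G) t x = fderiv ℝ (fun p : ℝ × ℝ => Φ p (1, 0)) (t, x) (0, 1) := by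
    rw [px_eq_fderiv (contDiff_pt hG) t x, e2]
  rw [d1, d2, fderiv_clm_apply hdiff (differentiableAt_const _),
    fderiv_clm_apply hdiff (differentiableAt_const _)]
  simp [hsym (1, 0) (0, 1)]

lemma cds {f : ℝ → ℝ} (hf : ContDiff ℝ ∞ f) : ContDiff ℝ ∞ (deriv f) :=
  (contDiff_infty_iff_deriv.mp hf).2

lemma haN {f : ℝ → ℝ} (hf : ContDiff ℝ ∞ f) (x : ℝ) : HasDerivAt f (deriv f x) x :=
  ((hf.differentiable (by norm_num)) x).hasDerivAt

lemma dm1 {f : ℝ → ℝ} (hf : ContDiff ℝ ∞ f) (h1 : ∀ x, deriv f x ≠ 0) :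
    deriv (fun x => deriv (deriv (deriv f)) x - 3 / 2 * (deriv f x)⁻¹ * deriv (deriv f) x ^ 2)
      = fun x => ((3 / 2 : ℝ) * deriv (deriv f) x ^ 3 + (-3 : ℝ) * deriv f x * deriv (deriv f) x * deriv (deriv (deriv f)) x + deriv f x ^ 2 * deriv (deriv (deriv (deriv f))) x) / deriv f x ^ 2 := by
  funext x
  have hx := h1 x
  have cd1 : ContDiff ℝ ∞ (deriv f) := cds hf
  have cd2 := cds cd1
  have cd3 := cds cd2
  have cd4 := cds cd3
  have cd5 := cds cd4
  refine (HasDerivAt.deriv (((haN cd3 x)).sub ((((haN cd1 x).inv hx).const_mul (3 / 2 : ℝ)).mul ((haN cd2 x).pow 2)))).trans ?_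
  simp only [Pi.inv_apply, Pi.pow_apply]
  field_simp
  ring

lemma dn1 {f : ℝ → ℝ} (hf : ContDiff ℝ ∞ f) (h1 : ∀ x, deriv f x ≠ 0) :
    deriv (fun x => -(1 / 2) * (deriv (deriv (deriv f)) x / deriv f x - 3 / 2 * (deriv (deriv f) x / deriv f x) ^ 2))
      = fun x => ((-3 / 2 : ℝ) * deriv (deriv f) x ^ 3 + (2 : ℝ) * deriv f x * deriv (deriv f) x * deriv (deriv (deriv f)) x + (-1 / 2 : ℝ) * deriv f x ^ 2 * deriv (deriv (deriv (deriv f))) x) / deriv f x ^ 3 := by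
  funext x
  have hx := h1 x
  have cd1 : ContDiff ℝ ∞ (deriv f) := cds hf
  have cd2 := cds cd1
  have cd3 := cds cd2
  have cd4 := cds cd3
  have cd5 := cds cd4
  refine (HasDerivAt.deriv ((((haN cd3 x).div (haN cd1 x) hx).sub (((((haN cd2 x).div (haN cd1 x) hx).pow 2)).const_mul (3 / 2 : ℝ))).const_mul (-(1 / 2) : ℝ))).trans ?_
  norm_num
  field_simp
  ring

lemma dm2 {f : ℝ → ℝ} (hf : ContDiff ℝ ∞ f) (h1 : ∀ x, deriv f x ≠ 0) :
    deriv (fun x => ((3 / 2 : ℝ) * deriv (deriv f) x ^ 3 + (-3 : ℝ) * deriv f x * deriv (deriv f) x * deriv (deriv (deriv f)) x + deriv f x ^ 2 * deriv (deriv (deriv (deriv f))) x) / deriv f x ^ 2)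
      = fun x => ((-3 : ℝ) * deriv (deriv f) x ^ 4 + (15 / 2 : ℝ) * deriv f x * deriv (deriv f) x ^ 2 * deriv (deriv (deriv f)) x + (-3 : ℝ) * deriv f x ^ 2 * deriv (deriv (deriv f)) x ^ 2 + (-3 : ℝ) * deriv f x ^ 2 * deriv (deriv f) x * deriv (deriv (deriv (deriv f))) x + deriv f x ^ 3 * deriv (deriv (deriv (deriv (deriv f)))) x) / deriv f x ^ 3 := by
  funext x
  have hx := h1 x
  have cd1 : ContDiff ℝ ∞ (deriv f) := cds hf
  have cd2 := cds cd1
  have cd3 := cds cd2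
  have cd4 := cds cd3
  have cd5 := cds cd4
  refine (HasDerivAt.deriv (((((((haN cd2 x).pow 3).const_mul (3 / 2 : ℝ)).add ((((haN cd1 x).const_mul (-3 : ℝ)).mul (haN cd2 x)).mul (haN cd3 x))).add (((haN cd1 x).pow 2).mul (haN cd4 x)))).div ((haN cd1 x).pow 2) (pow_ne_zero 2 hx))).trans ?_
  norm_num
  field_simp
  ring

lemma dm3 {f : ℝ → ℝ} (hf : ContDiff ℝ ∞ f) (h1 : ∀ x, deriv f x ≠ 0) :
    deriv (fun x => ((-3 : ℝ) * deriv (deriv f) x ^ 4 + (15 / 2 : ℝ) * deriv f x * deriv (deriv f) x ^ 2 * deriv (deriv (deriv f)) x + (-3 : ℝ) * deriv f x ^ 2 * deriv (deriv (deriv f)) x ^ 2 + (-3 : ℝ) * deriv f x ^ 2 * deriv (deriv f) x * deriv (deriv (deriv (deriv f))) x + deriv f x ^ 3 * deriv (deriv (deriv (deriv (deriv f)))) x) / deriv f x ^ 3)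
      = fun x => ((9 : ℝ) * deriv (deriv f) x ^ 5 + (-27 : ℝ) * deriv f x * deriv (deriv f) x ^ 3 * deriv (deriv (deriv f)) x + (18 : ℝ) * deriv f x ^ 2 * deriv (deriv f) x * deriv (deriv (deriv f)) x ^ 2 + (21 / 2 : ℝ) * deriv f x ^ 2 * deriv (deriv f) x ^ 2 * deriv (deriv (deriv (deriv f))) x + (-9 : ℝ) * deriv f x ^ 3 * deriv (deriv (deriv f)) x * deriv (deriv (deriv (deriv f))) x + (-3 : ℝ) * deriv f x ^ 3 * deriv (deriv f) x * deriv (deriv (deriv (deriv (deriv f)))) x + deriv f x ^ 4 * deriv (deriv (deriv (deriv (deriv (deriv f))))) x) / deriv f x ^ 4 := by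
  funext x
  have hx := h1 x
  have cd1 : ContDiff ℝ ∞ (deriv f) := cds hf
  have cd2 := cds cd1
  have cd3 := cds cd2
  have cd4 := cds cd3
  have cd5 := cds cd4
  refine (HasDerivAt.deriv (((((((((haN cd2 x).pow 4).const_mul (-3 : ℝ)).add ((((haN cd1 x).const_mul (15 / 2 : ℝ)).mul ((haN cd2 x).pow 2)).mul (haN cd3 x))).add ((((haN cd1 x).pow 2).const_mul (-3 : ℝ)).mul ((haN cd3 x).pow 2))).add (((((haN cd1 x).pow 2).const_mul (-3 : ℝ)).mul (haN cd2 x)).mul (haN cd4 x))).add (((haN cd1 x).pow 3).mul (haN cd5 x)))).div ((haN cd1 x).pow 3) (pow_ne_zero 3 hx))).trans ?_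
  norm_num
  field_simp
  ring

lemma dn2 {f : ℝ → ℝ} (hf : ContDiff ℝ ∞ f) (h1 : ∀ x, deriv f x ≠ 0) :
    deriv (fun x => ((-3 / 2 : ℝ) * deriv (deriv f) x ^ 3 + (2 : ℝ) * deriv f x * deriv (deriv f) x * deriv (deriv (deriv f)) x + (-1 / 2 : ℝ) * deriv f x ^ 2 * deriv (deriv (deriv (deriv f))) x) / deriv f x ^ 3)
      = fun x => ((9 / 2 : ℝ) * deriv (deriv f) x ^ 4 + (-17 / 2 : ℝ) * deriv f x * deriv (deriv f) x ^ 2 * deriv (deriv (deriv f)) x + (2 : ℝ) * deriv f x ^ 2 * deriv (deriv (deriv f)) x ^ 2 + (5 / 2 : ℝ) * deriv f x ^ 2 * deriv (deriv f) x * deriv (deriv (deriv (deriv f))) x + (-1 / 2 : ℝ) * deriv f x ^ 3 * deriv (deriv (deriv (deriv (deriv f)))) x) / deriv f x ^ 4 := by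
  funext x
  have hx := h1 x
  have cd1 : ContDiff ℝ ∞ (deriv f) := cds hf
  have cd2 := cds cd1
  have cd3 := cds cd2
  have cd4 := cds cd3
  have cd5 := cds cd4
  refine (HasDerivAt.deriv (((((((haN cd2 x).pow 3).const_mul (-3 / 2 : ℝ)).add ((((haN cd1 x).const_mul (2 : ℝ)).mul (haN cd2 x)).mul (haN cd3 x))).add ((((haN cd1 x).pow 2).const_mul (-1 / 2 : ℝ)).mul (haN cd4 x)))).div ((haN cd1 x).pow 3) (pow_ne_zero 3 hx))).trans ?_
  norm_num
  field_simp
  ring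

lemma dn3 {f : ℝ → ℝ} (hf : ContDiff ℝ ∞ f) (h1 : ∀ x, deriv f x ≠ 0) :
    deriv (fun x => ((9 / 2 : ℝ) * deriv (deriv f) x ^ 4 + (-17 / 2 : ℝ) * deriv f x * deriv (deriv f) x ^ 2 * deriv (deriv (deriv f)) x + (2 : ℝ) * deriv f x ^ 2 * deriv (deriv (deriv f)) x ^ 2 + (5 / 2 : ℝ) * deriv f x ^ 2 * deriv (deriv f) x * deriv (deriv (deriv (deriv f))) x + (-1 / 2 : ℝ) * deriv f x ^ 3 * deriv (deriv (deriv (deriv (deriv f)))) x) / deriv f x ^ 4)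
      = fun x => ((-18 : ℝ) * deriv (deriv f) x ^ 5 + (87 / 2 : ℝ) * deriv f x * deriv (deriv f) x ^ 3 * deriv (deriv (deriv f)) x + (-21 : ℝ) * deriv f x ^ 2 * deriv (deriv f) x * deriv (deriv (deriv f)) x ^ 2 + (-27 / 2 : ℝ) * deriv f x ^ 2 * deriv (deriv f) x ^ 2 * deriv (deriv (deriv (deriv f))) x + (13 / 2 : ℝ) * deriv f x ^ 3 * deriv (deriv (deriv f)) x * deriv (deriv (deriv (deriv f))) x + (3 : ℝ) * deriv f x ^ 3 * deriv (deriv f) x * deriv (deriv (deriv (deriv (deriv f)))) x + (-1 / 2 : ℝ) * deriv f x ^ 4 * deriv (deriv (deriv (deriv (deriv (deriv f))))) x) / deriv f x ^ 5 := by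
  funext x
  have hx := h1 x
  have cd1 : ContDiff ℝ ∞ (deriv f) := cds hf
  have cd2 := cds cd1
  have cd3 := cds cd2
  have cd4 := cds cd3
  have cd5 := cds cd4
  refine (HasDerivAt.deriv (((((((((haN cd2 x).pow 4).const_mul (9 / 2 : ℝ)).add ((((haN cd1 x).const_mul (-17 / 2 : ℝ)).mul ((haN cd2 x).pow 2)).mul (haN cd3 x))).add ((((haN cd1 x).pow 2).const_mul (2 : ℝ)).mul ((haN cd3 x).pow 2))).add (((((haN cd1 x).pow 2).const_mul (5 / 2 : ℝ)).mul (haN cd2 x)).mul (haN cd4 x))).add ((((haN cd1 x).pow 3).const_mul (-1 / 2 : ℝ)).mul (haN cd5 x)))).div ((haN cd1 x).pow 4) (pow_ne_zero 4 hx))).trans ?_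
  norm_num
  field_simp
  ring

/-- The Schwarzian transform
`w̃ = −(1/2)[u_xxx/u_x − (3/2)(u_xx/u_x)²]` maps a solution of the
Schwarzian-KdV equation `u_t = u_xxx − (3/2) u_x⁻¹ u_xx²` to a solution of
the KdV equation `w̃_t = w̃_xxx − 6 w̃ w̃_x`. -/
theorem stmt_14 (u : ℝ → ℝ → ℝ) (hu : ContDiff ℝ (⊤ : ℕ∞) (Function.uncurry u))
    (hux : ∀ t x, px u t x ≠ 0)
    (heq : ∀ t x, pt u t x =
      px (px (px u)) t x - (3 / 2) * (px u t x)⁻¹ * (px (px u) t x) ^ 2) :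
    ∀ t x, pt (fun t x => -(1 / 2) * (px (px (px u)) t x / px u t x
        - (3 / 2) * (px (px u) t x / px u t x) ^ 2)) t x =
      px (px (px (fun t x => -(1 / 2) * (px (px (px u)) t x / px u t x
        - (3 / 2) * (px (px u) t x / px u t x) ^ 2)))) t x
      - 6 * (-(1 / 2) * (px (px (px u)) t x / px u t x
          - (3 / 2) * (px (px u) t x / px u t x) ^ 2))
        * px (fun t x => -(1 / 2) * (px (px (px u)) t x / px u t x
          - (3 / 2) * (px (px u) t x / px u t x) ^ 2)) t x := by
  intro t x
  have hu' : ContDiff ℝ ∞ (Function.uncurry u) := hu.of_le (by simp)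
  have hpx1 := contDiff_px hu'
  have hpx2 := contDiff_px hpx1
  have hpx3 := contDiff_px hpx2
  have hf : ContDiff ℝ ∞ (u t) := hu'.comp (contDiff_const.prodMk contDiff_id)
  have h1 : ∀ y, deriv (u t) y ≠ 0 := fun y => hux t y
  have ept : pt u t = (fun x => deriv (deriv (deriv (u t))) x - 3 / 2 * (deriv (u t) x)⁻¹ * deriv (deriv (u t)) x ^ 2) := funext fun y => heq t y
  have e1c : pt (px u) t = px (pt u) t := funext fun y => pt_px_comm hu' t y
  have e2c : pt (px (px u)) t = px (pt (px u)) t := funext fun y => pt_px_comm hpx1 t y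
  have hB' : pt (px u) t x = deriv (fun x => deriv (deriv (deriv (u t))) x - 3 / 2 * (deriv (u t) x)⁻¹ * deriv (deriv (u t)) x ^ 2) x := by
    calc pt (px u) t x = px (pt u) t x := pt_px_comm hu' t x
    _ = deriv (pt u t) x := rfl
    _ = deriv (fun x => deriv (deriv (deriv (u t))) x - 3 / 2 * (deriv (u t) x)⁻¹ * deriv (deriv (u t)) x ^ 2) x := by rw [ept]
  have hC' : pt (px (px u)) t x = deriv (deriv (fun x => deriv (deriv (deriv (u t))) x - 3 / 2 * (deriv (u t) x)⁻¹ * deriv (deriv (u t)) x ^ 2)) x := by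
    calc pt (px (px u)) t x = px (pt (px u)) t x := pt_px_comm hpx1 t x
    _ = deriv (pt (px u) t) x := rfl
    _ = deriv (px (pt u) t) x := by rw [e1c]
    _ = deriv (deriv (pt u t)) x := rfl
    _ = deriv (deriv (fun x => deriv (deriv (deriv (u t))) x - 3 / 2 * (deriv (u t) x)⁻¹ * deriv (deriv (u t)) x ^ 2)) x := by rw [ept]
  have hA' : pt (px (px (px u))) t x = deriv (deriv (deriv (fun x => deriv (deriv (deriv (u t))) x - 3 / 2 * (deriv (u t) x)⁻¹ * deriv (deriv (u t)) x ^ 2))) x := by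
    calc pt (px (px (px u))) t x = px (pt (px (px u))) t x := pt_px_comm hpx2 t x
    _ = deriv (pt (px (px u)) t) x := rfl
    _ = deriv (px (pt (px u)) t) x := by rw [e2c]
    _ = deriv (deriv (pt (px u) t)) x := rfl
    _ = deriv (deriv (px (pt u) t)) x := by rw [e1c]
    _ = deriv (deriv (deriv (pt u t))) x := rfl
    _ = deriv (deriv (deriv (fun x => deriv (deriv (deriv (u t))) x - 3 / 2 * (deriv (u t) x)⁻¹ * deriv (deriv (u t)) x ^ 2))) x := by rw [ept]
  have hA : HasDerivAt (fun s => px (px (px u)) s x) (pt (px (px (px u))) t x) t := by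
    rw [pt_eq_fderiv hpx3 t x]; exact sec1_hasDerivAt hpx3 t x
  have hB : HasDerivAt (fun s => px u s x) (pt (px u) t x) t := by
    rw [pt_eq_fderiv hpx1 t x]; exact sec1_hasDerivAt hpx1 t x
  have hC : HasDerivAt (fun s => px (px u) s x) (pt (px (px u)) t x) t := by
    rw [pt_eq_fderiv hpx2 t x]; exact sec1_hasDerivAt hpx2 t x
  have hBne : px u t x ≠ 0 := hux t x
  have hL : deriv (fun s => -(1 / 2) * (px (px (px u)) s x / px u s x
          - 3 / 2 * (px (px u) s x / px u s x) ^ 2)) t = _ := HasDerivAt.deriv (((hA.div hB hBne).sub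
    (((hC.div hB hBne).pow 2).const_mul (3 / 2 : ℝ))).const_mul (-(1 / 2) : ℝ))
  simp only [Pi.div_apply] at hL
  have hLa : pt (fun t x => -(1 / 2) * (px (px (px u)) t x / px u t x
        - (3 / 2) * (px (px u) t x / px u t x) ^ 2)) t x
      = deriv (fun s => -(1 / 2) * (px (px (px u)) s x / px u s x
        - 3 / 2 * (px (px u) s x / px u s x) ^ 2)) t := rfl
  have hRa : px (px (px (fun t x => -(1 / 2) * (px (px (px u)) t x / px u t x
        - (3 / 2) * (px (px u) t x / px u t x) ^ 2)))) t x
      = deriv (deriv (deriv (fun x => -(1 / 2) * (deriv (deriv (deriv (u t))) x / deriv (u t) x - 3 / 2 * (deriv (deriv (u t)) x / deriv (u t) x) ^ 2)))) x := rfl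
  have hRb : px (fun t x => -(1 / 2) * (px (px (px u)) t x / px u t x
        - (3 / 2) * (px (px u) t x / px u t x) ^ 2)) t x
      = deriv (fun x => -(1 / 2) * (deriv (deriv (deriv (u t))) x / deriv (u t) x - 3 / 2 * (deriv (deriv (u t)) x / deriv (u t) x) ^ 2)) x := rfl
  have ea1 : px u t x = deriv (u t) x := rfl
  have ea2 : px (px u) t x = deriv (deriv (u t)) x := rfl
  have ea3 : px (px (px u)) t x = deriv (deriv (deriv (u t))) x := rfl
  have hbx := h1 x
  rw [hLa, hL, hRa, hRb, hA', hB', hC', dn1 hf h1, dn2 hf h1, dn3 hf h1,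
    dm1 hf h1, dm2 hf h1, dm3 hf h1, ea3, ea2, ea1]
  norm_num
  field_simp
  ring
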